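/- Let n ≥ 3 and let S_n be the star graph on vertices {0,1,...,n−1} with center 0. Then PswEnd(S_n) = PsEnd(S_n) ∪ {α ∈ PT({0,...,n−1}) : 0 ∈ dom(α) and |im(α)| = 1}. -/
import Mathlib


variable {V : Type*}

/-- Partial transformations of `V`. -/
abbrev PTrans (V : Type*) := V → Option V

/-- Monoid of partial transformations under (left-to-right) composition. -/
instance : Monoid (PTrans V) where
  mul f g := fun v => (f v).bind g
  one := fun v => some v
  mul_assoc f g h := by
    funext v
    show ((f v).bind g).bind h = (f v).bind (fun x => (g x).bind h)
    cases f v <;> simp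
  one_mul f := by funext v; rfl
  mul_one f := by
    funext v
    show (f v).bind (fun x => some x) = f v
    cases f v <;> simp

/-- Domain of a partial transformation. -/
def pdom (α : PTrans V) : Set V := {u | α u ≠ none}

/-- Image of a partial transformation. -/
def pim (α : PTrans V) : Set V := {v | ∃ u, α u = some v}

def IsPEnd (G : SimpleGraph V) (α : PTrans V) : Prop :=
  ∀ u v u' v', α u = some u' → α v = some v' → G.Adj u v → G.Adj u' v'

def IsPwEnd (G : SimpleGraph V) (α : PTrans V) : Prop :=
  ∀ u v u' v', α u = some u' → α v = some v' → G.Adj u v → u' ≠ v' → G.Adj u' v'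

def IsPsEnd (G : SimpleGraph V) (α : PTrans V) : Prop :=
  ∀ u v u' v', α u = some u' → α v = some v' → (G.Adj u v ↔ G.Adj u' v')

def IsPswEnd (G : SimpleGraph V) (α : PTrans V) : Prop :=
  ∀ u v u' v', α u = some u' → α v = some v' → ((G.Adj u v ∧ u' ≠ v') ↔ G.Adj u' v')

/-- Injectivity of a partial transformation. -/
def PInjective (α : PTrans V) : Prop :=
  ∀ u v w, α u = some w → α v = some w → u = v

open Classical in
/-- The inverse of a partial (injective) transformation. -/
noncomputable def pinv (α : PTrans V) : PTrans V :=
  fun v => if h : ∃ u, α u = some v then some h.choose else none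

/-- Partial automorphism: injective, and both it and its inverse are
partial endomorphisms. -/
def IsPAut (G : SimpleGraph V) (α : PTrans V) : Prop :=
  PInjective α ∧ IsPEnd G α ∧ IsPEnd G (pinv α)

/-- The star graph on vertices `{0,1,...,n-1}` with center `0`. -/
def starGraph (n : ℕ) : SimpleGraph (Fin n) :=
  SimpleGraph.fromRel (fun u _ => (u : ℕ) = 0)

theorem stmt13 (n : ℕ) (hn : 3 ≤ n) :
    {α : PTrans (Fin n) | IsPswEnd (starGraph n) α} =
      {α : PTrans (Fin n) | IsPsEnd (starGraph n) α} ∪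
      {α : PTrans (Fin n) | (⟨0, by omega⟩ : Fin n) ∈ pdom α ∧ ∃ v, pim α = {v}} := by
  set z : Fin n := ⟨0, by omega⟩ with hz
  have adj_iff : ∀ u v : Fin n, (starGraph n).Adj u v ↔ u ≠ v ∧ (u = z ∨ v = z) := by
    intro u v
    simp only [starGraph, SimpleGraph.fromRel_adj]
    constructor
    · rintro ⟨h1, h2 | h2⟩
      · exact ⟨h1, Or.inl (Fin.ext h2)⟩
      · exact ⟨h1, Or.inr (Fin.ext h2)⟩
    · rintro ⟨h1, h2 | h2⟩
      · exact ⟨h1, Or.inl (by rw [h2])⟩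
      · exact ⟨h1, Or.inr (by rw [h2])⟩
  ext α
  simp only [Set.mem_setOf_eq, Set.mem_union]
  constructor
  · intro hα
    rcases h0 : α z with _ | c
    · left
      intro u v u' v' hu hv
      have hu0 : u ≠ z := fun h => by rw [h, h0] at hu; cases hu
      have hv0 : v ≠ z := fun h => by rw [h, h0] at hv; cases hv
      have hnadj : ¬ (starGraph n).Adj u v := by
        rw [adj_iff]; rintro ⟨_, h | h⟩
        exacts [hu0 h, hv0 h]
      have hiff := hα u v u' v' hu hv
      exact ⟨fun h => absurd h hnadj, fun h => absurd (hiff.mpr h).1 hnadj⟩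
    · by_cases hsing : ∀ u u', α u = some u' → u' = c
      · right
        refine ⟨by simp [pdom, h0], c, ?_⟩
        ext w
        simp only [pim, Set.mem_setOf_eq, Set.mem_singleton_iff]
        constructor
        · rintro ⟨u, hu⟩; exact hsing u w hu
        · rintro rfl; exact ⟨z, h0⟩
      · push_neg at hsing
        obtain ⟨u, u', hu, huc⟩ := hsing
        have hu0 : u ≠ z := fun h => huc (by rw [h, h0] at hu; exact (Option.some.inj hu).symm)
        have key : ∀ b b', b ≠ z → α b = some b' → b' ≠ c := by
          intro b b' hb0 hb hbc
          by_cases hc : c = z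
          · have hadj' : (starGraph n).Adj u' b' := by
              rw [adj_iff]
              exact ⟨fun h => huc (h.trans hbc), Or.inr (hbc.trans hc)⟩
            have hnadj : ¬ (starGraph n).Adj u b := by
              rw [adj_iff]; rintro ⟨_, h | h⟩
              exacts [hu0 h, hb0 h]
            exact hnadj ((hα u b u' b' hu hb).mpr hadj').1
          · have hadjzu : (starGraph n).Adj z u := by
              rw [adj_iff]; exact ⟨Ne.symm hu0, Or.inl rfl⟩
            have hcu' : (starGraph n).Adj c u' :=
              (hα z u c u' h0 hu).mp ⟨hadjzu, Ne.symm huc⟩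
            have hu'z : u' = z := by
              rcases (adj_iff c u').mp hcu' with ⟨_, h | h⟩
              · exact absurd h hc
              · exact h
            have hadj'' : (starGraph n).Adj b' u' := by
              rw [adj_iff]
              refine ⟨fun h => huc ?_, Or.inr hu'z⟩
              · rw [← h, hbc]
            have hnadj : ¬ (starGraph n).Adj b u := by
              rw [adj_iff]; rintro ⟨_, h | h⟩
              exacts [hb0 h, hu0 h]
            exact hnadj ((hα b u b' u' hb hu).mpr hadj'').1
        left
        intro a b a' b' ha hb
        have hiff := hα a b a' b' ha hb
        refine ⟨fun hadj => ?_, fun h => (hiff.mpr h).1⟩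
        rcases (adj_iff a b).mp hadj with ⟨hab, haz | hbz⟩
        · have ha' : a' = c := by rw [haz, h0] at ha; exact (Option.some.inj ha).symm
          have hbz' : b ≠ z := fun h => hab (haz.trans h.symm)
          have := key b b' hbz' hb
          exact hiff.mp ⟨hadj, fun h => this (h.symm.trans ha')⟩
        · have hb' : b' = c := by rw [hbz, h0] at hb; exact (Option.some.inj hb).symm
          have haz' : a ≠ z := fun h => hab (h.trans hbz.symm)
          have := key a a' haz' ha
          exact hiff.mp ⟨hadj, fun h => this (h.trans hb')⟩
  · rintro (hps | ⟨hdom, v, hpim⟩)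
    · intro u v u' v' hu hv
      have hiff := hps u v u' v' hu hv
      exact ⟨fun h => hiff.mp h.1, fun h => ⟨hiff.mpr h, h.ne⟩⟩
    · have hall : ∀ u u', α u = some u' → u' = v := by
        intro u u' hu
        have : u' ∈ pim α := ⟨u, hu⟩
        rwa [hpim] at this
      intro a b a' b' ha hb
      have ha' := hall a a' ha
      have hb' := hall b b' hb
      constructor
      · rintro ⟨_, hne⟩; exact absurd (ha'.trans hb'.symm) hne
      · intro h; exact absurd (ha'.trans hb'.symm) h.ne
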